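/- (Theorem 1, frequency-domain part.) Every mirrored signal vector q_n[m,g], for all n, m, g ∈ ℕ, lies in the ℂ-linear span of the L vectors {q_0(ψ_1),…,q_0(ψ_L)} in ℂ^{Q+1}. Consequently, for any fixed n_0, m_0 ∈ ℕ and any G > Q, the (Q+1) × (G−Q) complex matrix Q whose j-th column (j = 0,…,G−Q−1) is q_{n_0}[m_0, j] has rank at most L. -/

import Mathlib

/-- The mirrored basis vector `p_m(f) ∈ ℂ^{P+1}`, with `k`-th entry
`exp(i(m+k)f) + exp(i(m+P−k)f)`. -/
noncomputable def pvec (P m : ℕ) (f : ℝ) : Fin (P + 1) → ℂ := fun k =>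
  Complex.exp (Complex.I * ((m + (k : ℕ) : ℕ) : ℂ) * (f : ℂ)) +
  Complex.exp (Complex.I * ((m + P - (k : ℕ) : ℕ) : ℂ) * (f : ℂ))

/-- The mirrored basis vector `q_g(τ) ∈ ℂ^{Q+1}`, with `k`-th entry
`exp(−i(g+k)τ) + exp(−i(g+Q−k)τ)`. -/
noncomputable def qvec (Q g : ℕ) (τ : ℝ) : Fin (Q + 1) → ℂ := fun k =>
  Complex.exp (-Complex.I * ((g + (k : ℕ) : ℕ) : ℂ) * (τ : ℂ)) +
  Complex.exp (-Complex.I * ((g + Q - (k : ℕ) : ℕ) : ℂ) * (τ : ℂ))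

/-- The noiseless CACC output `ξ_n[m,g]`. -/
noncomputable def xiSig (L : ℕ) (α : ℕ → ℂ) (φ ψ Ω : ℕ → ℝ) (n m g : ℕ) : ℂ :=
  ∑ l ∈ Finset.Icc 1 L,
    (α 0 * (starRingEnd ℂ) (α l) * Complex.exp (-Complex.I * (m : ℂ) * (φ l : ℂ)) *
        Complex.exp (Complex.I * (g : ℂ) * (ψ l : ℂ)) *
        Complex.exp (Complex.I * (n : ℂ) * (Ω 0 : ℂ)) +
      (starRingEnd ℂ) (α 0) * α l * Complex.exp (Complex.I * (m : ℂ) * (φ l : ℂ)) *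
        Complex.exp (-Complex.I * (g : ℂ) * (ψ l : ℂ)) *
        Complex.exp (Complex.I * (n : ℂ) * (Ω l : ℂ)))

/-- The mirrored (frequency-domain) signal vector `q_n[m,g] ∈ ℂ^{Q+1}` with `k`-th entry
`ξ_n[m,g+k] + ξ_n[m,g+Q−k]`. -/
noncomputable def qSig (Q L : ℕ) (α : ℕ → ℂ) (φ ψ Ω : ℕ → ℝ) (n m g : ℕ) :
    Fin (Q + 1) → ℂ := fun k =>
  xiSig L α φ ψ Ω n m (g + (k : ℕ)) + xiSig L α φ ψ Ω n m (g + Q - (k : ℕ))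


/-!
As a function of the delay index `g`, `ξ_n[m,g]` is a combination of the `2L` exponentials
`g ↦ exp(± i g ψ_l)`. Mirroring a sequence is linear, and it sends `g ↦ exp(-i g τ)` to
`exp(-i g τ) • q_0(τ)` and `g ↦ exp(i g τ)` to `exp(i (g+Q) τ) • q_0(τ)`. Hence every `q_n[m,g]`
lies in the span of the `q_0(ψ_l)`, and a matrix whose columns lie in the span of `L` vectors
has rank at most `L`.
-/

open Complex

def mirror {R : Type*} [CommSemiring R] (Q g : ℕ) : (ℕ → R) →ₗ[R] (Fin (Q + 1) → R) where
  toFun x k := x (g + k) + x (g + Q - k)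
  map_add' x y := by ext k; simp only [Pi.add_apply]; ring
  map_smul' c x := by ext k; simp only [Pi.smul_apply, smul_eq_mul, RingHom.id_apply]; ring

lemma qSig_eq_mirror (Q L : ℕ) (α : ℕ → ℂ) (φ ψ Ω : ℕ → ℝ) (n m g : ℕ) :
    qSig Q L α φ ψ Ω n m g = mirror Q g (xiSig L α φ ψ Ω n m) := rfl

lemma mirror_cexp_neg (Q g : ℕ) (τ : ℝ) :
    mirror Q g (fun j => cexp (-I * j * τ)) = cexp (-I * g * τ) • qvec Q 0 τ := by
  ext k
  have hk : (k : ℕ) ≤ Q := Nat.lt_succ_iff.mp k.isLt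
  simp only [mirror, qvec, LinearMap.coe_mk, AddHom.coe_mk, Pi.smul_apply, smul_eq_mul, mul_add,
    ← Complex.exp_add]
  push_cast [zero_add, Nat.cast_sub hk, Nat.cast_sub (hk.trans (Nat.le_add_left Q g))]
  ring_nf

lemma mirror_cexp (Q g : ℕ) (τ : ℝ) :
    mirror Q g (fun j => cexp (I * j * τ)) = cexp (I * (g + Q) * τ) • qvec Q 0 τ := by
  ext k
  have hk : (k : ℕ) ≤ Q := Nat.lt_succ_iff.mp k.isLt
  simp only [mirror, qvec, LinearMap.coe_mk, AddHom.coe_mk, Pi.smul_apply, smul_eq_mul, mul_add,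
    ← Complex.exp_add]
  push_cast [zero_add, Nat.cast_sub hk, Nat.cast_sub (hk.trans (Nat.le_add_left Q g))]
  ring_nf

lemma xiSig_eq_sum_cexp (L : ℕ) (α : ℕ → ℂ) (φ ψ Ω : ℕ → ℝ) (n m : ℕ) :
    ∃ a b : ℕ → ℂ, xiSig L α φ ψ Ω n m =
      fun g : ℕ => ∑ l ∈ Finset.Icc 1 L, (a l * cexp (I * g * ψ l) + b l * cexp (-I * g * ψ l)) :=
  ⟨fun l => α 0 * starRingEnd ℂ (α l) * cexp (-I * m * φ l) * cexp (I * n * Ω 0),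
    fun l => starRingEnd ℂ (α 0) * α l * cexp (I * m * φ l) * cexp (I * n * Ω l),
    funext fun _ => Finset.sum_congr rfl fun _ _ => by ring⟩

lemma mirror_sum_cexp_mem_span {ι : Type*} (Q g : ℕ) (s : Finset ι) (τ : ι → ℝ) (a b : ι → ℂ) :
    mirror Q g (fun j => ∑ l ∈ s, (a l * cexp (I * j * τ l) + b l * cexp (-I * j * τ l))) ∈
      Submodule.span ℂ ((fun l => qvec Q 0 (τ l)) '' s) := by
  have hsum : (fun j : ℕ => ∑ l ∈ s, (a l * cexp (I * j * τ l) + b l * cexp (-I * j * τ l))) =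
      ∑ l ∈ s, ((a l • fun j : ℕ => cexp (I * j * τ l)) +
        b l • fun j : ℕ => cexp (-I * j * τ l)) := by
    ext j; simp [Finset.sum_apply]
  rw [hsum, map_sum]
  refine Submodule.sum_mem _ fun l hl => ?_
  have hq : qvec Q 0 (τ l) ∈ Submodule.span ℂ ((fun l => qvec Q 0 (τ l)) '' s) :=
    Submodule.subset_span ⟨l, hl, rfl⟩
  simp only [map_add, map_smul, mirror_cexp, mirror_cexp_neg, smul_smul]
  exact add_mem (Submodule.smul_mem _ _ hq) (Submodule.smul_mem _ _ hq)

lemma Matrix.rank_le_card_of_col_mem_span {m n ι K : Type*} [Fintype m] [Fintype n] [Field K]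
    (A : Matrix m n K) (s : Finset ι) (v : ι → m → K)
    (h : ∀ j, A.col j ∈ Submodule.span K (v '' s)) : A.rank ≤ s.card := by
  classical
  rw [Matrix.rank_eq_finrank_span_cols]
  calc Module.finrank K (Submodule.span K (Set.range A.col))
      ≤ Module.finrank K (Submodule.span K ((s.image v : Finset (m → K)) : Set (m → K))) :=
        Submodule.finrank_mono <| Submodule.span_le.2 <| Set.range_subset_iff.2 fun j => by
          simpa using h j
    _ ≤ (s.image v).card := finrank_span_finset_le_card _
    _ ≤ s.card := Finset.card_image_le

/-- Theorem 1, frequency-domain part: every mirrored signal vector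
`q_n[m,g]` lies in the span of the `L` vectors `{q_0(ψ_1),…,q_0(ψ_L)}`; consequently
the `(Q+1) × (G−Q)` matrix whose `j`-th column is `q_{n_0}[m_0,j]` has rank at most `L`. -/
theorem qSig_span_and_rank (Q L : ℕ) (α : ℕ → ℂ) (φ ψ Ω : ℕ → ℝ) :
    (∀ n m g : ℕ, qSig Q L α φ ψ Ω n m g ∈
      Submodule.span ℂ ((fun l : ℕ => qvec Q 0 (ψ l)) '' ↑(Finset.Icc 1 L))) ∧
    (∀ n₀ m₀ G : ℕ, Q < G →
      Matrix.rank (Matrix.of fun (k : Fin (Q + 1)) (j : Fin (G - Q)) =>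
        qSig Q L α φ ψ Ω n₀ m₀ (j : ℕ) k) ≤ L) := by
  have hspan : ∀ n m g : ℕ, qSig Q L α φ ψ Ω n m g ∈
      Submodule.span ℂ ((fun l : ℕ => qvec Q 0 (ψ l)) '' ↑(Finset.Icc 1 L)) := by
    intro n m g
    obtain ⟨a, b, hξ⟩ := xiSig_eq_sum_cexp L α φ ψ Ω n m
    rw [qSig_eq_mirror, hξ]
    exact mirror_sum_cexp_mem_span Q g _ ψ a b
  refine ⟨hspan, fun n₀ m₀ G _ => ?_⟩
  refine (Matrix.rank_le_card_of_col_mem_span _ (Finset.Icc 1 L) (fun l => qvec Q 0 (ψ l))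
    fun j => ?_).trans_eq (by simp)
  exact hspan n₀ m₀ j
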